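/- For the 2-species TAZRP on ℤ_L in the sector with one particle of each species, the matrix product expressions evaluate as: Tr(X_{00}^{L-2} X_{10} X_{01}) computed with X_{σ¹,σ²} = Σ_{j≥0}(a⁺)^j k^{σ¹}(a⁻)^{σ²} gives Σ over j₁,...,j_L ≥ 0 of Tr((a⁺)^{j₁+⋯+j_{L-1}} k (a⁺)^{j_L} a⁻) = L - 1, and Tr(X_{00}^{L-2} X_{01} X_{10}) = 1. -/

import Mathlib

/-- The q=0 oscillator a⁺ on the Fock space F = ℕ →₀ ℂ : |m⟩ ↦ |m+1⟩. -/
noncomputable def aPlus : Module.End ℂ (ℕ →₀ ℂ) :=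
  Finsupp.lsum ℂ fun m => Finsupp.lsingle (m + 1)

/-- The q=0 oscillator a⁻ : |m⟩ ↦ |m-1⟩, with |-1⟩ = 0. -/
noncomputable def aMinus : Module.End ℂ (ℕ →₀ ℂ) :=
  Finsupp.lsum ℂ fun m => if m = 0 then 0 else Finsupp.lsingle (m - 1)

/-- The q=0 oscillator k : |m⟩ ↦ δ_{m,0}|m⟩. -/
noncomputable def kOsc : Module.End ℂ (ℕ →₀ ℂ) :=
  Finsupp.lsum ℂ fun m => if m = 0 then Finsupp.lsingle 0 else 0

/-- The trace Tr(X) = Σ_{m≥0} ⟨m|X|m⟩ on the Fock space. -/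
noncomputable def FockTr (X : Module.End ℂ (ℕ →₀ ℂ)) : ℂ :=
  ∑ᶠ m : ℕ, (X (Finsupp.single m 1)) m

/-!
At `q = 0` the oscillators satisfy `a⁻ a⁺ = 1`, `k a⁺ = 0` and `a⁻ k = 0`. These relations
collapse every monomial of the two sums either to `0` or to a matrix unit `|n⟩⟨m|`
(`(a⁺)ⁿ k a⁻ = |n⟩⟨1|` and `(a⁺)ⁿ k = |n⟩⟨0|`), whose trace is `δₙₘ`. Hence the first sum counts
the tuples with `j₁ + ⋯ + j_{L-1} = 1` and `j_L = 0`, of which there are `L - 1`, and the second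
has the single nonzero term `j₁ = ⋯ = j_{L-1} = 0`, `j_L = 1`.
-/

lemma Fintype.sum_eq_one_iff_eq_single {ι : Type*} [Fintype ι] [DecidableEq ι] (f : ι → ℕ) :
    ∑ i, f i = 1 ↔ ∃ i, f = Pi.single i 1 := by
  have key := Finsupp.sum_eq_one_iff (Finsupp.equivFunOnFinite.symm f)
  rw [Finsupp.sum_fintype _ _ fun _ => rfl] at key
  refine key.trans (exists_congr fun i => ?_)
  rw [← Finsupp.equivFunOnFinite_symm_single, Equiv.apply_eq_iff_eq]

lemma Pi.single_left_injective {ι M : Type*} [DecidableEq ι] [Zero M] {c : M} (hc : c ≠ 0) :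
    Function.Injective fun i : ι => (Pi.single i c : ι → M) := by
  intro i i' h
  by_contra hne
  simpa [hne, hc] using congrFun h i

lemma finsum_ite_sum_eq_one_and_eq_zero {M : Type*} [AddCommMonoidWithOne M] {ι : Type*}
    [Fintype ι] :
    ∑ᶠ p : (ι → ℕ) × ℕ, (if ∑ i, p.1 i = 1 ∧ p.2 = 0 then (1 : M) else 0) = Fintype.card ι := by
  classical
  set e : ι → (ι → ℕ) × ℕ := fun i => (Pi.single i 1, 0)
  have he : Function.Injective e := fun _ _ h =>
    Pi.single_left_injective one_ne_zero (congrArg Prod.fst h)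
  have hcond (p : (ι → ℕ) × ℕ) : (∑ i, p.1 i = 1 ∧ p.2 = 0) ↔ p ∈ Set.range e := by
    simp [e, Fintype.sum_eq_one_iff_eq_single, Prod.ext_iff, eq_comm]
  calc ∑ᶠ p : (ι → ℕ) × ℕ, (if ∑ i, p.1 i = 1 ∧ p.2 = 0 then (1 : M) else 0)
      = ∑ᶠ p ∈ Set.range e, (1 : M) := by simp_rw [hcond, finsum_eq_if]
    _ = Fintype.card ι := by rw [finsum_mem_range he, finsum_eq_sum_of_fintype]; simp

lemma finsum_ite_sum_eq_zero_and_eq_one {M : Type*} [AddCommMonoidWithOne M] {ι : Type*}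
    [Fintype ι] :
    ∑ᶠ p : (ι → ℕ) × ℕ, (if ∑ i, p.1 i = 0 ∧ p.2 = 1 then (1 : M) else 0) = 1 := by
  have hcond (p : (ι → ℕ) × ℕ) : (∑ i, p.1 i = 0 ∧ p.2 = 1) ↔ p = (0, 1) := by
    simp [Finset.sum_eq_zero_iff, Prod.ext_iff, funext_iff]
  simp_rw [hcond]
  rw [finsum_eq_single _ (0, 1) fun p hp => if_neg hp, if_pos rfl]

open Finsupp

@[simp]
lemma aPlus_single (m : ℕ) (c : ℂ) : aPlus (single m c) = single (m + 1) c := by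
  simp [aPlus]

@[simp]
lemma aMinus_single (m : ℕ) (c : ℂ) :
    aMinus (single m c) = if m = 0 then 0 else single (m - 1) c := by
  simp only [aMinus, lsum_single]; split <;> simp

@[simp]
lemma kOsc_single (m : ℕ) (c : ℂ) :
    kOsc (single m c) = if m = 0 then single 0 c else 0 := by
  simp only [kOsc, lsum_single]; split <;> simp

lemma aPlus_pow_single (n m : ℕ) (c : ℂ) : (aPlus ^ n) (single m c) = single (m + n) c := by
  induction n with
  | zero => simp
  | succ n ih => rw [pow_succ', Module.End.mul_apply, ih, aPlus_single, Nat.add_assoc]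

lemma aMinus_mul_aPlus : aMinus * aPlus = 1 :=
  lhom_ext fun m c => by simp

lemma kOsc_mul_aPlus : kOsc * aPlus = 0 :=
  lhom_ext fun m c => by simp

lemma aMinus_mul_kOsc : aMinus * kOsc = 0 :=
  lhom_ext fun m c => by by_cases hm : m = 0 <;> simp [hm]

lemma kOsc_mul_aPlus_pow_succ (j : ℕ) : kOsc * aPlus ^ (j + 1) = 0 := by
  rw [pow_succ', ← mul_assoc, kOsc_mul_aPlus, zero_mul]

lemma aMinus_mul_aPlus_pow_succ (j : ℕ) : aMinus * aPlus ^ (j + 1) = aPlus ^ j := by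
  rw [pow_succ', ← mul_assoc, aMinus_mul_aPlus, one_mul]

lemma fockTr_eq_of_apply_single (X : Module.End ℂ (ℕ →₀ ℂ)) (i j : ℕ)
    (hX : ∀ m, X (single m 1) = if m = i then single j 1 else 0) :
    FockTr X = if j = i then 1 else 0 := by
  rw [FockTr, finsum_eq_single _ i fun m hm => by simp [hX, hm]]
  simp [hX, single_apply]

lemma fockTr_aPlus_pow_mul_kOsc (p : ℕ) : FockTr (aPlus ^ p * kOsc) = if p = 0 then 1 else 0 :=
  fockTr_eq_of_apply_single _ 0 p fun m => by
    by_cases hm : m = 0 <;> simp [hm, aPlus_pow_single]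

lemma fockTr_aPlus_pow_mul_kOsc_mul_aMinus (n : ℕ) :
    FockTr (aPlus ^ n * kOsc * aMinus) = if n = 1 then 1 else 0 :=
  fockTr_eq_of_apply_single _ 1 n fun m => by
    rcases m with _ | _ | m <;> simp [aPlus_pow_single]

@[simp]
lemma fockTr_zero : FockTr 0 = 0 := by
  simp [FockTr]

lemma fockTr_aPlus_pow_mul_kOsc_mul_aPlus_pow_mul_aMinus (n j : ℕ) :
    FockTr (aPlus ^ n * kOsc * aPlus ^ j * aMinus) = if n = 1 ∧ j = 0 then 1 else 0 := by
  rcases j with _ | j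
  · simp [fockTr_aPlus_pow_mul_kOsc_mul_aMinus]
  · simp [mul_assoc, kOsc_mul_aPlus_pow_succ]

lemma fockTr_aPlus_pow_mul_aMinus_mul_aPlus_pow_mul_kOsc (n j : ℕ) :
    FockTr (aPlus ^ n * aMinus * aPlus ^ j * kOsc) = if n = 0 ∧ j = 1 then 1 else 0 := by
  rcases j with _ | j
  · simp [mul_assoc, aMinus_mul_kOsc]
  · rw [mul_assoc (aPlus ^ n), aMinus_mul_aPlus_pow_succ, ← pow_add, fockTr_aPlus_pow_mul_kOsc]
    simp

/-- For the 2-TAZRP on ℤ_L in the sector with one particle of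
each species, the matrix product expressions evaluate as
Tr(X_{00}^{L-2} X_{10} X_{01})
  = Σ_{j₁,…,j_L ≥ 0} Tr((a⁺)^{j₁+⋯+j_{L-1}} k (a⁺)^{j_L} a⁻) = L - 1, and
Tr(X_{00}^{L-2} X_{01} X_{10})
  = Σ_{j₁,…,j_L ≥ 0} Tr((a⁺)^{j₁+⋯+j_{L-1}} a⁻ (a⁺)^{j_L} k) = 1.
(The first L-1 summation indices are grouped as p.1 : Fin (L-1) → ℕ and
the last as p.2 : ℕ.) -/
theorem two_tazrp_trace_evaluation (L : ℕ) (hL : 2 ≤ L) :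
    (∑ᶠ p : (Fin (L - 1) → ℕ) × ℕ,
        FockTr (aPlus ^ (∑ r, p.1 r) * kOsc * aPlus ^ p.2 * aMinus))
      = (L : ℂ) - 1 ∧
    (∑ᶠ p : (Fin (L - 1) → ℕ) × ℕ,
        FockTr (aPlus ^ (∑ r, p.1 r) * aMinus * aPlus ^ p.2 * kOsc))
      = 1 := by
  simp only [fockTr_aPlus_pow_mul_kOsc_mul_aPlus_pow_mul_aMinus,
    fockTr_aPlus_pow_mul_aMinus_mul_aPlus_pow_mul_kOsc]
  refine ⟨?_, finsum_ite_sum_eq_zero_and_eq_one⟩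
  rw [finsum_ite_sum_eq_one_and_eq_zero, Fintype.card_fin, Nat.cast_pred (by omega)]
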